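/- arXiv:1807.10549 — 9 statements merged into one kernel-verified Lean document; each statement's English description precedes it below -/
import Mathlib

section
/- The Malthusian parameter λ is differentiable at every point of U₁ ∪ U₂, and its gradient is given by: for x ∈ U₁, ∇λ(x) = (e^{-λ(x) x_b} / G(x), 0), and for x ∈ U₂, ∇λ(x) = (0, e^{-λ(x) x_d} / G(x)). -/
open MeasureTheory Set Filter

noncomputable section

/-- The viable set `𝒱 = {(x_b, x_d) : min(x_b, x_d) > 1}`. -/
def viable : Set (ℝ × ℝ) := {x : ℝ × ℝ | 1 < min x.1 x.2}

/-- `U₁ = {x ∈ 𝒱 : x_b < x_d}`. -/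
def U1 : Set (ℝ × ℝ) := {x ∈ viable | x.1 < x.2}

/-- `U₂ = {x ∈ 𝒱 : x_d < x_b}`. -/
def U2 : Set (ℝ × ℝ) := {x ∈ viable | x.2 < x.1}

/-- `lam` is a Malthusian parameter function on `𝒱`. -/
def IsMalthusian (lam : ℝ × ℝ → ℝ) : Prop :=
  ∀ x ∈ viable, 0 < lam x ∧ (∫ a in (0:ℝ)..(min x.1 x.2), Real.exp (-(lam x) * a)) = 1

/-- The mean generation time `G(x) = ∫₀^{min(x_b,x_d)} a e^{-λ(x) a} da`. -/
def genTime (lam : ℝ × ℝ → ℝ) (x : ℝ × ℝ) : ℝ :=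
  ∫ a in (0:ℝ)..(min x.1 x.2), a * Real.exp (-(lam x) * a)

/-! Since `∫₀^m e^{-λa} da = (1 - e^{-λm})/λ`, the Malthusian equation reads `e^{-λm} = 1 - λ`,
i.e. `m = φ(λ) := -log(1 - λ)/λ` with `m = min(x_b, x_d)`. The map `φ` is strictly increasing from
`(0, 1)` into `(1, ∞)`, so `λ` depends on `x` only through `min(x_b, x_d)`, and on the diagonal it
is the inverse of `φ`. Near a point of `U₁` (resp. `U₂`) the minimum is the coordinate `x_b`
(resp. `x_d`), so the inverse function theorem gives the partial derivative `1/φ'(λ)` in that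
coordinate; computing `G` in closed form shows `G = e^{-λm} φ'(λ)`. -/

open Real Topology

lemma integral_exp_neg_mul {l : ℝ} (hl : l ≠ 0) (m : ℝ) :
    ∫ a in (0:ℝ)..m, exp (-l * a) = (1 - exp (-l * m)) / l := by
  rw [intervalIntegral.integral_comp_mul_left (fun a => exp a) (neg_ne_zero.mpr hl), integral_exp]
  simp only [mul_zero, exp_zero, smul_eq_mul]
  field_simp
  ring

lemma integral_mul_exp_neg_mul {l : ℝ} (hl : l ≠ 0) (m : ℝ) :
    ∫ a in (0:ℝ)..m, a * exp (-l * a) = (1 - (1 + l * m) * exp (-l * m)) / l ^ 2 := by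
  have antideriv : ∀ a : ℝ, HasDerivAt (fun a => -((a / l + 1 / l ^ 2) * exp (-l * a)))
      (a * exp (-l * a)) a := by
    intro a
    have hexp := ((hasDerivAt_id a).const_mul (-l)).exp
    have hlin := ((hasDerivAt_id a).div_const l).add_const (1 / l ^ 2)
    refine (hlin.mul hexp).neg.congr_deriv ?_
    simp only [id]
    field_simp
    ring
  rw [intervalIntegral.integral_eq_sub_of_hasDerivAt (fun a _ => antideriv a)
    ((by fun_prop : Continuous fun a => a * exp (-l * a)).intervalIntegrable 0 m)]
  simp only [mul_zero, exp_zero]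
  field_simp
  ring

/-- The age bound `m` for which `l` solves `∫₀^m e^{-l a} da = 1`, i.e. `e^{-l m} = 1 - l`. -/
def malthusAge (l : ℝ) : ℝ := -log (1 - l) / l

lemma hasStrictDerivAt_malthusAge {l : ℝ} (hl₀ : l ≠ 0) (hl₁ : l ≠ 1) :
    HasStrictDerivAt malthusAge ((l / (1 - l) + log (1 - l)) / l ^ 2) l := by
  have hsub : 1 - l ≠ 0 := sub_ne_zero.mpr hl₁.symm
  have hlog := ((hasStrictDerivAt_id l).const_sub 1).log hsub
  refine (hlog.neg.div (hasStrictDerivAt_id l) hl₀).congr_deriv ?_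
  simp only [id, Pi.neg_apply]
  field_simp
  ring

lemma deriv_malthusAge_pos {l : ℝ} (hl₀ : l ≠ 0) (hl₁ : l < 1) :
    0 < deriv malthusAge l := by
  have hsub : 0 < 1 - l := by linarith
  rw [(hasStrictDerivAt_malthusAge hl₀ hl₁.ne).hasDerivAt.deriv]
  -- `log y > 1 - 1/y` for `y = 1 - l ≠ 1`
  have hlog : log (1 - l)⁻¹ < (1 - l)⁻¹ - 1 :=
    log_lt_sub_one_of_pos (inv_pos.mpr hsub) (by simpa [sub_eq_self] using hl₀)
  have hfrac : (1 - l)⁻¹ - 1 = l / (1 - l) := by field_simp; ring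
  rw [log_inv, hfrac] at hlog
  exact div_pos (by linarith) (by positivity)

lemma one_lt_malthusAge {l : ℝ} (hl : l ∈ Ioo 0 1) : 1 < malthusAge l := by
  have hlog : log (1 - l) < (1 - l) - 1 :=
    log_lt_sub_one_of_pos (by linarith [hl.2]) (by linarith [hl.1])
  rw [malthusAge, lt_div_iff₀ hl.1]
  linarith

lemma strictMonoOn_malthusAge : StrictMonoOn malthusAge (Ioo 0 1) := by
  refine strictMonoOn_of_deriv_pos (convex_Ioo 0 1) (fun l hl => ?_) (fun l hl => ?_)
  · exact (hasStrictDerivAt_malthusAge hl.1.ne' hl.2.ne).hasDerivAt.continuousAt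
      |>.continuousWithinAt
  · rw [interior_Ioo] at hl
    exact deriv_malthusAge_pos hl.1.ne' hl.2

lemma isOpen_viable : IsOpen viable :=
  isOpen_lt continuous_const (continuous_fst.min continuous_snd)

namespace IsMalthusian

variable {lam : ℝ × ℝ → ℝ} (hlam : IsMalthusian lam) {x : ℝ × ℝ}
include hlam

lemma exp_neg_mul_min (hx : x ∈ viable) : exp (-lam x * min x.1 x.2) = 1 - lam x := by
  obtain ⟨hpos, hint⟩ := hlam x hx
  rw [integral_exp_neg_mul hpos.ne', div_eq_one_iff_eq hpos.ne'] at hint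
  linarith

lemma mem_Ioo (hx : x ∈ viable) : lam x ∈ Ioo 0 1 :=
  ⟨(hlam x hx).1, by linarith [hlam.exp_neg_mul_min hx, exp_pos (-lam x * min x.1 x.2)]⟩

lemma malthusAge_apply (hx : x ∈ viable) : malthusAge (lam x) = min x.1 x.2 := by
  rw [malthusAge, ← hlam.exp_neg_mul_min hx, log_exp]
  field_simp [(hlam.mem_Ioo hx).1.ne']

lemma apply_eq_of_min_eq {y : ℝ × ℝ} (hx : x ∈ viable) (hy : y ∈ viable)
    (h : min x.1 x.2 = min y.1 y.2) : lam x = lam y :=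
  strictMonoOn_malthusAge.injOn (hlam.mem_Ioo hx) (hlam.mem_Ioo hy) <| by
    rw [hlam.malthusAge_apply hx, hlam.malthusAge_apply hy, h]

lemma apply_malthusAge_diag {l : ℝ} (hl : l ∈ Ioo 0 1) :
    lam (malthusAge l, malthusAge l) = l := by
  have hdiag : (malthusAge l, malthusAge l) ∈ viable := by
    simpa [viable] using one_lt_malthusAge hl
  refine strictMonoOn_malthusAge.injOn (hlam.mem_Ioo hdiag) hl ?_
  rw [hlam.malthusAge_apply hdiag, min_self]

lemma genTime_eq (hx : x ∈ viable) :
    genTime lam x = exp (-lam x * min x.1 x.2) * deriv malthusAge (lam x) := by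
  obtain ⟨hpos, hlt⟩ := hlam.mem_Ioo hx
  have hexp := hlam.exp_neg_mul_min hx
  have hlog : log (1 - lam x) = -lam x * min x.1 x.2 := by rw [← hexp, log_exp]
  rw [genTime, integral_mul_exp_neg_mul hpos.ne',
    (hasStrictDerivAt_malthusAge hpos.ne' hlt.ne).hasDerivAt.deriv, hexp, hlog]
  have : 1 - lam x ≠ 0 := by linarith
  field_simp
  ring

lemma hasDerivAt_diag {m : ℝ} (hm : 1 < m) :
    HasDerivAt (fun m => lam (m, m)) (exp (-lam (m, m) * m) / genTime lam (m, m)) m := by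
  have hdiag : (m, m) ∈ viable := by simpa [viable] using hm
  set l := lam (m, m)
  have hl := hlam.mem_Ioo hdiag
  have hage : malthusAge l = m := by simpa using hlam.malthusAge_apply hdiag
  have hinv : ∀ᶠ l' in 𝓝 l, lam (malthusAge l', malthusAge l') = l' :=
    eventually_of_mem (isOpen_Ioo.mem_nhds hl) fun _ => hlam.apply_malthusAge_diag
  have hφ := hasStrictDerivAt_malthusAge hl.1.ne' hl.2.ne
  rw [← hφ.hasDerivAt.deriv] at hφ
  have hder := hφ.to_local_left_inverse (g := fun m => lam (m, m))
    (deriv_malthusAge_pos hl.1.ne' hl.2).ne' hinv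
  rw [hage] at hder
  refine hder.hasDerivAt.congr_deriv ?_
  rw [hlam.genTime_eq hdiag, min_self, div_mul_cancel_left₀ (exp_pos _).ne']

lemma hasFDerivAt_of_eventually_min_eq {p : ℝ × ℝ →L[ℝ] ℝ} (hx : x ∈ viable)
    (hp : ∀ᶠ y in 𝓝 x, min y.1 y.2 = p y) :
    HasFDerivAt lam ((exp (-lam x * p x) / genTime lam x) • p) x := by
  have hpx : min x.1 x.2 = p x := hp.self_of_nhds
  have hdiag : ∀ᶠ y in 𝓝 x, lam y = lam (p y, p y) := by
    filter_upwards [hp, isOpen_viable.mem_nhds hx] with y hpy hy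
    refine hlam.apply_eq_of_min_eq hy ?_ (by rw [hpy, min_self])
    simpa [viable, ← hpy] using hy
  have hval : lam x = lam (p x, p x) := hdiag.self_of_nhds
  have hgen : genTime lam x = genTime lam (p x, p x) := by
    simp only [genTime, hval, hpx, min_self]
  rw [hgen, hval]
  have hder := hlam.hasDerivAt_diag (show 1 < p x from hpx ▸ hx)
  exact (hder.comp_hasFDerivAt x p.hasFDerivAt).congr_of_eventuallyEq hdiag

end IsMalthusian

/-- The Malthusian parameter is differentiable on `U₁ ∪ U₂`, with gradient
`(e^{-λ(x) x_b}/G(x), 0)` on `U₁` and `(0, e^{-λ(x) x_d}/G(x))` on `U₂`. -/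
theorem malthus_gradient (lam : ℝ × ℝ → ℝ) (hlam : IsMalthusian lam) :
    (∀ x ∈ U1, HasFDerivAt lam
      ((Real.exp (-(lam x) * x.1) / genTime lam x) • ContinuousLinearMap.fst ℝ ℝ ℝ) x) ∧
    (∀ x ∈ U2, HasFDerivAt lam
      ((Real.exp (-(lam x) * x.2) / genTime lam x) • ContinuousLinearMap.snd ℝ ℝ ℝ) x) := by
  constructor
  · intro x hx
    refine hlam.hasFDerivAt_of_eventually_min_eq (p := .fst ℝ ℝ ℝ) hx.1 ?_
    filter_upwards [(isOpen_lt continuous_fst continuous_snd).mem_nhds hx.2] with y hy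
    exact min_eq_left hy.le
  · intro x hx
    refine hlam.hasFDerivAt_of_eventually_min_eq (p := .snd ℝ ℝ ℝ) hx.1 ?_
    filter_upwards [(isOpen_lt continuous_snd continuous_fst).mem_nhds hx.2] with y hy
    exact min_eq_right hy.le
end
end

section
/- For every x ∈ U₁ ∪ U₂ one has e^{-λ(x) min(x_b,x_d)} / G(x) ≤ 1 / ∫₀¹ a e^{-a} da; in particular sup_{x ∈ U₁∪U₂} ‖∇λ(x)‖ < +∞, where for x ∈ U₁, ∇λ(x) = (e^{-λ(x) x_b} / G(x), 0) and for x ∈ U₂, ∇λ(x) = (0, e^{-λ(x) x_d} / G(x)). -/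
open MeasureTheory Set Filter

noncomputable section

/-- The gradient `∇λ(x)` of the Malthusian parameter: `(e^{-λ(x) x_b}/G(x), 0)` on `U₁` and
`(0, e^{-λ(x) x_d}/G(x))` on `U₂`. -/
def gradLam (lam : ℝ × ℝ → ℝ) (x : ℝ × ℝ) : ℝ × ℝ :=
  if x.1 < x.2 then (Real.exp (-(lam x) * x.1) / genTime lam x, 0)
  else (0, Real.exp (-(lam x) * x.2) / genTime lam x)

lemma aux_intble (c A B : ℝ) :
    IntervalIntegrable (fun a => a * Real.exp (c * a)) volume A B :=
  (Continuous.mul continuous_id (Real.continuous_exp.comp (continuous_const.mul continuous_id))).intervalIntegrable A B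

lemma I_pos : 0 < ∫ a in (0:ℝ)..1, a * Real.exp (-a) := by
  apply intervalIntegral.intervalIntegral_pos_of_pos_on
  · have : (fun a : ℝ => a * Real.exp (-a)) = fun a => a * Real.exp ((-1) * a) := by
      funext a; ring_nf
    rw [this]; exact aux_intble (-1) 0 1
  · exact fun a ha => mul_pos ha.1 (Real.exp_pos _)
  · exact one_pos

lemma key (lam : ℝ × ℝ → ℝ) (hlam : IsMalthusian lam) (x : ℝ × ℝ) (hx : x ∈ U1 ∪ U2) :
    0 ≤ Real.exp (-(lam x) * min x.1 x.2) / genTime lam x ∧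
    Real.exp (-(lam x) * min x.1 x.2) / genTime lam x
      ≤ 1 / ∫ a in (0:ℝ)..1, a * Real.exp (-a) := by
  have hxv : x ∈ viable := by rcases hx with h | h; exacts [h.1, h.1]
  obtain ⟨hl, hint⟩ := hlam x hxv
  set l := lam x with hldef
  set m := min x.1 x.2 with hmdef
  have hm : 1 < m := hxv
  have hln : -l ≠ 0 := neg_ne_zero.2 hl.ne'
  have hA : (∫ a in (0:ℝ)..m, Real.exp (-l * a)) = (1 - Real.exp (-l * m)) / l := by
    rw [intervalIntegral.integral_comp_mul_left (fun y => Real.exp y) hln,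
      integral_exp]
    rw [smul_eq_mul]
    rw [mul_zero, Real.exp_zero]
    field_simp
    ring
  have heq : l = 1 - Real.exp (-l * m) := by
    rw [hA] at hint
    field_simp at hint
    rw [neg_mul]
    linarith
  have hl1 : l ≤ 1 := by have := Real.exp_pos (-l * m); linarith
  have hexp1 : Real.exp (-l * m) ≤ 1 := by
    apply Real.exp_le_one_iff.2
    nlinarith
  have hsplit : genTime lam x
      = (∫ a in (0:ℝ)..1, a * Real.exp (-l * a)) + ∫ a in (1:ℝ)..m, a * Real.exp (-l * a) :=
    (intervalIntegral.integral_add_adjacent_intervals (aux_intble _ _ _) (aux_intble _ _ _)).symm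
  have h2 : 0 ≤ ∫ a in (1:ℝ)..m, a * Real.exp (-l * a) := by
    apply intervalIntegral.integral_nonneg hm.le
    intro a ha
    exact mul_nonneg (by linarith [ha.1]) (Real.exp_pos _).le
  have hIleft : (∫ a in (0:ℝ)..1, a * Real.exp (-a)) ≤ ∫ a in (0:ℝ)..1, a * Real.exp (-l * a) := by
    apply intervalIntegral.integral_mono_on (by norm_num)
    · have : (fun a : ℝ => a * Real.exp (-a)) = fun a => a * Real.exp ((-1) * a) := by
        funext a; ring_nf
      rw [this]; exact aux_intble (-1) 0 1
    · exact aux_intble _ _ _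
    · intro a ha
      apply mul_le_mul_of_nonneg_left _ ha.1
      apply Real.exp_le_exp.2
      nlinarith [ha.1, ha.2]
  have hG : (∫ a in (0:ℝ)..1, a * Real.exp (-a)) ≤ genTime lam x := by
    rw [hsplit]; linarith
  have hI := I_pos
  constructor
  · exact div_nonneg (Real.exp_pos _).le (by linarith)
  · exact div_le_div₀ zero_le_one hexp1 hI hG

/-- For every `x ∈ U₁ ∪ U₂`, `e^{-λ(x) min(x_b,x_d)}/G(x) ≤ 1/∫₀¹ a e^{-a} da`;
in particular the fitness gradient is uniformly bounded on `U₁ ∪ U₂`. -/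
theorem malthus_gradient_bounded (lam : ℝ × ℝ → ℝ) (hlam : IsMalthusian lam) :
    (∀ x ∈ U1 ∪ U2,
      Real.exp (-(lam x) * min x.1 x.2) / genTime lam x
        ≤ 1 / ∫ a in (0:ℝ)..1, a * Real.exp (-a)) ∧
    (∃ C : ℝ, ∀ x ∈ U1 ∪ U2, ‖gradLam lam x‖ ≤ C) := by
  constructor
  · exact fun x hx => (key lam hlam x hx).2
  · refine ⟨1 / ∫ a in (0:ℝ)..1, a * Real.exp (-a), fun x hx => ?_⟩
    have hk := key lam hlam x hx
    rcases hx with h | h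
    · have hmin : min x.1 x.2 = x.1 := min_eq_left h.2.le
      rw [hmin] at hk
      rw [gradLam, if_pos h.2]
      calc ‖(Real.exp (-(lam x) * x.1) / genTime lam x, (0:ℝ))‖
          = |Real.exp (-(lam x) * x.1) / genTime lam x| := by
            rw [Prod.norm_def, norm_zero, Real.norm_eq_abs,
              max_eq_left (abs_nonneg _)]
        _ ≤ _ := by rw [abs_of_nonneg hk.1]; exact hk.2
    · have hmin : min x.1 x.2 = x.2 := min_eq_right h.2.le
      rw [hmin] at hk
      rw [gradLam, if_neg (not_lt.2 h.2.le)]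
      calc ‖((0:ℝ), Real.exp (-(lam x) * x.2) / genTime lam x)‖
          = |Real.exp (-(lam x) * x.2) / genTime lam x| := by
            rw [Prod.norm_def, norm_zero, Real.norm_eq_abs,
              max_eq_right (abs_nonneg _)]
        _ ≤ _ := by rw [abs_of_nonneg hk.1]; exact hk.2
end
end

section
/- For all x, y ∈ 𝒱 the following equivalences hold: max(λ(y) − λ(x), 0) > 0 ⟺ λ(y) > λ(x) ⟺ min(y_b, y_d) > min(x_b, x_d). -/
open MeasureTheory Set Filter

noncomputable section

lemma integral_eval (l T : ℝ) (hl : l ≠ 0) :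
    (∫ a in (0:ℝ)..T, Real.exp (-l * a)) = (1 - Real.exp (-(l * T))) / l := by
  have h := intervalIntegral.integral_comp_mul_left (c := -l) Real.exp (by simpa using hl)
    (a := 0) (b := T)
  simp only [mul_zero, integral_exp, Real.exp_zero, smul_eq_mul, neg_mul] at h ⊢
  rw [h, ← neg_inv, div_eq_mul_inv]
  ring

lemma key_eq (l T : ℝ) (hl : 0 < l)
    (h : (∫ a in (0:ℝ)..T, Real.exp (-l * a)) = 1) :
    l < 1 ∧ l * T = -Real.log (1 - l) := by
  rw [integral_eval l T hl.ne'] at h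
  have hexp : Real.exp (-(l * T)) = 1 - l := by
    field_simp at h; linarith
  have hl1 : l < 1 := by
    have := Real.exp_pos (-(l * T)); rw [hexp] at this; linarith
  refine ⟨hl1, ?_⟩
  have := Real.log_exp (-(l * T))
  rw [hexp] at this
  linarith

lemma mono_key (a b Ta Tb : ℝ) (ha : 0 < a) (hb1 : b < 1) (hab : a < b)
    (hTa : a * Ta = -Real.log (1 - a)) (hTb : b * Tb = -Real.log (1 - b)) :
    Ta < Tb := by
  have hb : 0 < b := ha.trans hab
  have hne : (1 - b) ≠ (1 : ℝ) := by intro h; apply hb.ne'; linarith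
  have hconc := strictConcaveOn_log_Ioi.2
    (show (1 - b) ∈ Ioi (0:ℝ) by simp only [mem_Ioi]; linarith)
    (show (1:ℝ) ∈ Ioi (0:ℝ) by simp only [mem_Ioi]; linarith)
    hne
    (show (0:ℝ) < a / b by positivity)
    (show (0:ℝ) < 1 - a / b by rw [sub_pos, div_lt_one hb]; exact hab)
    (show a / b + (1 - a / b) = 1 by ring)
  have harg : (a / b) • (1 - b) + (1 - a / b) • (1 : ℝ) = 1 - a := by
    simp only [smul_eq_mul]; field_simp; ring
  rw [harg, Real.log_one, smul_eq_mul, smul_eq_mul, mul_zero, add_zero] at hconc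
  have h2 : a * Real.log (1 - b) < b * Real.log (1 - a) := by
    have := (mul_lt_mul_iff_right₀ hb).mpr hconc
    calc a * Real.log (1 - b) = b * (a / b * Real.log (1 - b)) := by field_simp
    _ < b * Real.log (1 - a) := this
  have h3 : b * (a * Ta) < a * (b * Tb) := by rw [hTa, hTb]; linarith
  have h4 : (a * b) * Ta < (a * b) * Tb := by ring_nf at h3 ⊢; linarith
  exact lt_of_mul_lt_mul_left h4 (by positivity)

/-- Invasion criterion: for `x, y ∈ 𝒱`,
`max(λ(y) − λ(x), 0) > 0 ⟺ λ(y) > λ(x) ⟺ min(y_b,y_d) > min(x_b,x_d)`. -/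
theorem invasion_iff (lam : ℝ × ℝ → ℝ) (hlam : IsMalthusian lam)
    (x : ℝ × ℝ) (hx : x ∈ viable) (y : ℝ × ℝ) (hy : y ∈ viable) :
    (0 < max (lam y - lam x) 0 ↔ lam x < lam y) ∧
    (lam x < lam y ↔ min x.1 x.2 < min y.1 y.2) := by
  obtain ⟨hxpos, hxint⟩ := hlam x hx
  obtain ⟨hypos, hyint⟩ := hlam y hy
  obtain ⟨hx1, hxeq⟩ := key_eq (lam x) (min x.1 x.2) hxpos hxint
  obtain ⟨hy1, hyeq⟩ := key_eq (lam y) (min y.1 y.2) hypos hyint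
  constructor
  · simp [lt_max_iff, sub_pos]
  · constructor
    · intro h
      exact mono_key (lam x) (lam y) _ _ hxpos hy1 h hxeq hyeq
    · intro h
      rcases lt_trichotomy (lam x) (lam y) with h' | h' | h'
      · exact h'
      · exfalso
        rw [h'] at hxeq
        have : min x.1 x.2 = min y.1 y.2 := by
          have := hxeq.trans hyeq.symm
          exact mul_left_cancel₀ hypos.ne' this
        linarith
      · exfalso
        have := mono_key (lam y) (lam x) _ _ hypos hx1 h' hyeq hxeq
        linarith
end
end

section
/- Let x, y ∈ 𝒱 and set m = min(y_b, y_d). The set of real solutions z of the equation z − 1 = (z − 1) ∫₀^m e^{(z−1−λ(x))a} da is exactly {1, 1 + λ(x) − λ(y)}; consequently the smallest real solution equals 1 − max(λ(y) − λ(x), 0). In particular, if λ(y) ≤ λ(x) then z = 1 is the smallest solution, and if λ(y) > λ(x) the smallest solution is 1 + λ(x) − λ(y) < 1. -/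
open MeasureTheory Set Filter

noncomputable section

/-- The set of real solutions `z` of `z − 1 = (z − 1)·∫₀^{min(y_b,y_d)} e^{(z−1−λ(x))a} da`. -/
def solSet (lam : ℝ × ℝ → ℝ) (x y : ℝ × ℝ) : Set ℝ :=
  {z : ℝ | z - 1 = (z - 1) * ∫ a in (0:ℝ)..(min y.1 y.2), Real.exp ((z - 1 - lam x) * a)}

lemma integral_exp_strictMono {m : ℝ} (hm : 0 < m) :
    StrictMono (fun μ : ℝ => ∫ a in (0:ℝ)..m, Real.exp (μ * a)) := by
  intro μ ν h
  apply intervalIntegral.integral_lt_integral_of_continuousOn_of_le_of_exists_lt hm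
  · exact (Real.continuous_exp.comp (continuous_const.mul continuous_id)).continuousOn
  · exact (Real.continuous_exp.comp (continuous_const.mul continuous_id)).continuousOn
  · intro a ha
    exact Real.exp_le_exp.2 (mul_le_mul_of_nonneg_right h.le ha.1.le)
  · exact ⟨m, ⟨hm.le, le_rfl⟩, Real.exp_lt_exp.2 (by nlinarith)⟩

/-- The fixed-point equation for the extinction probability has exactly the solutions
`{1, 1 + λ(x) − λ(y)}`, and its smallest solution is `1 − max(λ(y) − λ(x), 0)`. -/
theorem extinction_probability_solutions (lam : ℝ × ℝ → ℝ) (hlam : IsMalthusian lam)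
    (x : ℝ × ℝ) (hx : x ∈ viable) (y : ℝ × ℝ) (hy : y ∈ viable) :
    solSet lam x y = {1, 1 + lam x - lam y} ∧
    IsLeast (solSet lam x y) (1 - max (lam y - lam x) 0) ∧
    (lam y ≤ lam x → IsLeast (solSet lam x y) 1) ∧
    (lam x < lam y →
      IsLeast (solSet lam x y) (1 + lam x - lam y) ∧ 1 + lam x - lam y < 1) := by
  set m : ℝ := min y.1 y.2 with hmdef
  have hm : 0 < m := lt_trans one_pos hy
  have hI : (∫ a in (0:ℝ)..m, Real.exp ((-(lam y)) * a)) = 1 := (hlam y hy).2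
  have hinj := (integral_exp_strictMono hm).injective
  have hset : solSet lam x y = {1, 1 + lam x - lam y} := by
    ext z
    simp only [solSet, mem_setOf_eq, mem_insert_iff, mem_singleton_iff]
    constructor
    · intro hz
      by_cases h1 : z = 1
      · exact Or.inl h1
      · right
        have hz1 : z - 1 ≠ 0 := sub_ne_zero.2 h1
        have heq : (∫ a in (0:ℝ)..m, Real.exp ((z - 1 - lam x) * a)) = 1 :=
          mul_left_cancel₀ hz1 (by rw [mul_one]; exact hz.symm)
        have := hinj (heq.trans hI.symm)
        linarith
    · rintro (rfl | rfl)
      · ring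
      · by_cases h1 : lam x = lam y
        · rw [h1]; ring
        · have : (1 + lam x - lam y) - 1 - lam x = -(lam y) := by ring
          rw [this, hI]; ring
  refine ⟨hset, ?_, ?_, ?_⟩
  · constructor
    · rw [hset]
      rcases le_total (lam y) (lam x) with h | h
      · have : 1 - max (lam y - lam x) 0 = 1 := by rw [max_eq_right (by linarith)]; ring
        rw [this]; left; rfl
      · have : 1 - max (lam y - lam x) 0 = 1 + lam x - lam y := by
          rw [max_eq_left (by linarith)]; ring
        rw [this]; right; rfl
    · intro w hw
      rw [hset] at hw
      rcases hw with rfl | rfl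
      · have := le_max_right (lam y - lam x) 0; linarith
      · have := le_max_left (lam y - lam x) 0; linarith
  · intro h
    constructor
    · rw [hset]; left; rfl
    · intro w hw
      rw [hset] at hw
      rcases hw with rfl | rfl
      · exact le_refl 1
      · linarith
  · intro h
    refine ⟨⟨?_, ?_⟩, by linarith⟩
    · rw [hset]; right; rfl
    · intro w hw
      rw [hset] at hw
      rcases hw with rfl | rfl
      · linarith
      · exact le_refl _
end
end

section
/- Let m₁₁ > 0, m₂₁ ≥ 0, m₂₂ < 0, η > 0, let M be the 2×2 lower-triangular matrix with entries M₁₁ = m₁₁, M₁₂ = 0, M₂₁ = m₂₁, M₂₂ = m₂₂, and let 𝒟 : [0,∞) → M₂(ℝ) be a continuous matrix-valued function with 𝒟₁₂(t) = 0 for all t and 𝒟(t) → 0 as t → ∞. Then any differentiable solution z : [0,∞) → ℝ² of dz/dt = (M + 𝒟(t)) z(t) − η (|z₁(t)| + |z₂(t)|) z(t) with z(0) ∈ (0,∞) × [0,∞) converges as t → ∞ to the vector z̄ given by z̄₁ = (m₁₁/η) · 1/(1 + m₂₁/(m₁₁ − m₂₂)) and z̄₂ = (m₂₁/(m₁₁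 − m₂₂)) z̄₁. -/
/-!
The first coordinate stays positive, since `z₁' = g(t) z₁` gives `z₁ = z₁(0) exp ∫ g`. In the
ratio `ρ = z₂ / z₁` the nonlinear term `η ‖z‖₁` cancels, leaving the affine equation
`ρ' = (m₂₂ + 𝒟₂₂ − m₁₁ − 𝒟₁₁) ρ + m₂₁ + 𝒟₂₁`, whose coefficient tends to `m₂₂ − m₁₁ < 0`; hence
`ρ → m₂₁ / (m₁₁ − m₂₂)`. Then `y = 1 / z₁` solves the affine equation
`y' = −(m₁₁ + 𝒟₁₁) y + η (1 + |ρ|)`, so `y → η (1 + m₂₁ / (m₁₁ − m₂₂)) / m₁₁`. Both limits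
come from one fact: if `e' = a e + b` with `a → α < 0` and `b → 0`, then `e²` obeys a Grönwall
inequality with negative rate, so `e → 0`.
-/

open MeasureTheory Set Filter Real Topology

theorem eq_mul_exp_integral_of_hasDerivWithinAt {f g : ℝ → ℝ} {a : ℝ}
    (hg : ContinuousOn g (Ici a))
    (hf : ∀ t ∈ Ici a, HasDerivWithinAt f (g t * f t) (Ici a) t) :
    ∀ t ∈ Ici a, f t = f a * exp (∫ s in a..t, g s) := by
  intro t (ht : a ≤ t)
  set G : ℝ → ℝ := fun u => ∫ s in a..u, g s
  have hG : ∀ x ∈ Ici a, HasDerivWithinAt G (g x) (Ici x) x := fun x (hx : a ≤ x) =>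
    intervalIntegral.integral_hasDerivWithinAt_right (t := Ioi x)
      (hg.mono (uIcc_of_le hx ▸ Icc_subset_Ici_self)).intervalIntegrable
      ((hg.mono fun z hz => hx.trans (le_of_lt hz)).stronglyMeasurableAtFilter_nhdsWithin
        measurableSet_Ioi x)
      ((hg x hx).mono fun z hz => hx.trans (le_of_lt hz))
  have hGc : ContinuousOn G (Icc a t) := by
    rw [← uIcc_of_le ht]
    exact intervalIntegral.continuousOn_primitive_interval
      ((hg.mono (uIcc_of_le ht ▸ Icc_subset_Ici_self)).integrableOn_compact isCompact_uIcc)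
  have hconst : ∀ x ∈ Icc a t, f x * exp (-G x) = f a * exp (-G a) := by
    refine constant_of_has_deriv_right_zero ?_ fun x hx => ?_
    · have hfc : ContinuousOn f (Icc a t) := fun x hx =>
        (hf x hx.1).continuousWithinAt.mono Icc_subset_Ici_self
      exact hfc.mul (continuous_exp.comp_continuousOn hGc.neg)
    · have := ((hf x hx.1).mono (Ici_subset_Ici.2 hx.1)).mul (hG x hx.1).neg.exp
      exact this.congr_deriv (by ring)
  have hGa : G a = 0 := intervalIntegral.integral_same
  have hft := hconst t (right_mem_Icc.2 ht)
  rw [hGa, neg_zero, exp_zero, mul_one] at hft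
  rw [← hft, mul_assoc, ← exp_add, neg_add_cancel, exp_zero, mul_one]

theorem sq_le_of_hasDerivAt_affine {e a b : ℝ → ℝ} {k δ T : ℝ} (hk : 0 < k)
    (he : ∀ x ≥ T, HasDerivAt e (a x * e x + b x) x)
    (ha : ∀ x ≥ T, a x ≤ -k) (hb : ∀ x ≥ T, |b x| ≤ δ) :
    ∀ t ≥ T, e t ^ 2 ≤ e T ^ 2 * exp (-k * (t - T)) + δ ^ 2 / k ^ 2 := by
  intro t ht
  have hsq : ∀ x ≥ T, HasDerivAt (fun s => e s ^ 2) (2 * e x * (a x * e x + b x)) x :=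
    fun x hx => by simpa using (he x hx).fun_pow 2
  -- AM-GM: `2 e b ≤ k e² + b² / k`
  have hbound : ∀ x ≥ T, 2 * e x * (a x * e x + b x) ≤ -k * e x ^ 2 + δ ^ 2 / k := by
    intro x hx
    have hamgm : 2 * e x * b x ≤ k * e x ^ 2 + b x ^ 2 / k := by
      rw [← sub_nonneg]
      have : k * e x ^ 2 + b x ^ 2 / k - 2 * e x * b x = (k * e x - b x) ^ 2 / k := by
        field_simp; ring
      rw [this]; positivity
    have hb2 : b x ^ 2 ≤ δ ^ 2 := by
      simpa only [sq_abs] using pow_le_pow_left₀ (abs_nonneg _) (hb x hx) 2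
    have hae : a x * e x ^ 2 ≤ -k * e x ^ 2 := mul_le_mul_of_nonneg_right (ha x hx) (sq_nonneg _)
    have hbk : b x ^ 2 / k ≤ δ ^ 2 / k := div_le_div_of_nonneg_right hb2 hk.le
    nlinarith
  have hgronwall := le_gronwallBound_of_liminf_deriv_right_le (f := fun s => e s ^ 2) (b := t)
    (fun x hx => (hsq x hx.1).continuousAt.continuousWithinAt)
    (fun x hx r hr => (hsq x hx.1).hasDerivWithinAt.liminf_right_slope_le hr) le_rfl
    (fun x hx => hbound x hx.1) t (right_mem_Icc.2 ht)
  rw [gronwallBound_of_K_ne_0 (neg_ne_zero.2 hk.ne')] at hgronwall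
  have hexp : 0 < exp (-k * (t - T)) := exp_pos _
  have htail : δ ^ 2 / k / -k * (exp (-k * (t - T)) - 1) ≤ δ ^ 2 / k ^ 2 := by
    rw [div_neg, div_div, ← sq, neg_mul_comm, neg_sub]
    exact mul_le_of_le_one_right (by positivity) (by linarith)
  linarith

theorem tendsto_zero_of_hasDerivAt_affine {e a b : ℝ → ℝ} {α : ℝ} (hα : α < 0)
    (ha : Tendsto a atTop (𝓝 α)) (hb : Tendsto b atTop (𝓝 0))
    (he : ∀ᶠ t in atTop, HasDerivAt e (a t * e t + b t) t) :
    Tendsto e atTop (𝓝 0) := by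
  rw [Metric.tendsto_nhds]
  intro ε hε
  obtain ⟨k, hk, hαk⟩ : ∃ k, 0 < k ∧ α < -k := ⟨-α / 2, by linarith, by linarith⟩
  obtain ⟨T, hT⟩ := eventually_atTop.1 <| he.and <|
    (ha.eventually_le_const hαk).and
    ((tendsto_zero_iff_abs_tendsto_zero b).1 hb |>.eventually_le_const
      (by positivity : 0 < ε * k / 2))
  have hdecay : Tendsto (fun t => e T ^ 2 * exp (-k * (t - T))) atTop (𝓝 0) := by
    have : Tendsto (fun t => -k * (t - T)) atTop atBot :=
      (tendsto_atTop_add_const_right atTop (-T) tendsto_id).const_mul_atTop_of_neg (by linarith)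
    simpa using (tendsto_exp_atBot.comp this).const_mul (e T ^ 2)
  filter_upwards [eventually_ge_atTop T, hdecay.eventually_lt_const (by positivity : 0 < ε ^ 2 / 2)]
    with t hTt hsmall
  have hsq := sq_le_of_hasDerivAt_affine hk (fun x hx => (hT x hx).1) (fun x hx => (hT x hx).2.1)
    (fun x hx => (hT x hx).2.2) t hTt
  rw [dist_0_eq_abs]
  refine abs_lt_of_sq_lt_sq ?_ hε.le
  calc e t ^ 2 ≤ e T ^ 2 * exp (-k * (t - T)) + (ε * k / 2) ^ 2 / k ^ 2 := hsq
    _ < ε ^ 2 := by field_simp at hsmall ⊢; nlinarith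

theorem tendsto_of_hasDerivAt_affine {r a c : ℝ → ℝ} {α γ : ℝ} (hα : α < 0)
    (ha : Tendsto a atTop (𝓝 α)) (hc : Tendsto c atTop (𝓝 γ))
    (hr : ∀ᶠ t in atTop, HasDerivAt r (a t * r t + c t) t) :
    Tendsto r atTop (𝓝 (-γ / α)) := by
  have he : ∀ᶠ t in atTop, HasDerivAt (fun s => r s - -γ / α)
      (a t * (r t - -γ / α) + (c t + a t * (-γ / α))) t :=
    hr.mono fun t h => (h.sub_const _).congr_deriv (by ring)
  have hb : Tendsto (fun t => c t + a t * (-γ / α)) atTop (𝓝 0) := by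
    convert hc.add (ha.mul_const (-γ / α)) using 2
    rw [mul_div_cancel₀ _ hα.ne, add_neg_cancel]
  simpa using (tendsto_zero_of_hasDerivAt_affine hα ha hb he).add_const (-γ / α)

theorem hasDerivAt_div_of_lowerTriangular {x y : ℝ → ℝ} {p q c n t : ℝ}
    (hx : HasDerivAt x (p * x t - n * x t) t) (hy : HasDerivAt y (c * x t + q * y t - n * y t) t)
    (hxt : x t ≠ 0) : HasDerivAt (fun s => y s / x s) ((q - p) * (y t / x t) + c) t :=
  (hy.div hx hxt).congr_deriv (by field_simp; ring)

theorem hasDerivAt_inv_of_logistic {x y : ℝ → ℝ} {p η t : ℝ}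
    (hx : HasDerivAt x (p * x t - η * (|x t| + |y t|) * x t) t) (hxt : 0 < x t) :
    HasDerivAt (fun s => (x s)⁻¹) (-p * (x t)⁻¹ + η * (1 + |y t / x t|)) t :=
  (hx.inv hxt.ne').congr_deriv (by rw [abs_div, abs_of_pos hxt]; field_simp; ring)

theorem ode_convergence_perturbed_general
    (m11 m21 m22 η : ℝ) (hm11 : 0 < m11) (hm21 : 0 ≤ m21) (hm22 : m22 < 0) (hη : 0 < η)
    (D11 D21 D22 : ℝ → ℝ)
    (hD11c : ContinuousOn D11 (Ici 0))
    (hD11 : Tendsto D11 atTop (nhds 0)) (hD21 : Tendsto D21 atTop (nhds 0))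
    (hD22 : Tendsto D22 atTop (nhds 0))
    (z1 z2 : ℝ → ℝ)
    (hz1 : ∀ t ∈ Ici (0:ℝ), HasDerivWithinAt z1
      ((m11 + D11 t) * z1 t - η * (|z1 t| + |z2 t|) * z1 t) (Ici 0) t)
    (hz2 : ∀ t ∈ Ici (0:ℝ), HasDerivWithinAt z2
      ((m21 + D21 t) * z1 t + (m22 + D22 t) * z2 t - η * (|z1 t| + |z2 t|) * z2 t) (Ici 0) t)
    (h0 : 0 < z1 0) :
    Tendsto z1 atTop (nhds ((m11 / η) * (1 / (1 + m21 / (m11 - m22))))) ∧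
    Tendsto z2 atTop
      (nhds ((m21 / (m11 - m22)) * ((m11 / η) * (1 / (1 + m21 / (m11 - m22)))))) := by
  have hlim (m : ℝ) {D : ℝ → ℝ} (hD : Tendsto D atTop (𝓝 0)) :
      Tendsto (fun t => m + D t) atTop (𝓝 m) := by simpa using hD.const_add m
  have hz1c : ContinuousOn z1 (Ici 0) := fun t ht => (hz1 t ht).continuousWithinAt
  have hz2c : ContinuousOn z2 (Ici 0) := fun t ht => (hz2 t ht).continuousWithinAt
  have hpos : ∀ t ∈ Ici (0:ℝ), 0 < z1 t := fun t ht => by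
    rw [eq_mul_exp_integral_of_hasDerivWithinAt
      (g := fun t => m11 + D11 t - η * (|z1 t| + |z2 t|)) (by fun_prop)
      (fun s hs => (hz1 s hs).congr_deriv (by ring)) t ht]
    positivity
  have hz1' (t : ℝ) (ht : 0 < t) := (hz1 t ht.le).hasDerivAt (Ici_mem_nhds ht)
  have hz2' (t : ℝ) (ht : 0 < t) := (hz2 t ht.le).hasDerivAt (Ici_mem_nhds ht)
  set ρ := m21 / (m11 - m22)
  have hρ0 : 0 ≤ ρ := div_nonneg hm21 (by linarith)
  have hρ : Tendsto (fun t => z2 t / z1 t) atTop (𝓝 ρ) := by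
    convert tendsto_of_hasDerivAt_affine (by linarith : m22 - m11 < 0)
      ((hlim m22 hD22).sub (hlim m11 hD11)) (hlim m21 hD21)
      ((eventually_gt_atTop 0).mono fun t ht =>
        hasDerivAt_div_of_lowerTriangular (hz1' t ht) (hz2' t ht) (hpos t ht.le).ne') using 2
    rw [← neg_div_neg_eq, neg_neg, neg_sub]
  have hinv : Tendsto (fun t => (z1 t)⁻¹) atTop (𝓝 (η * (1 + ρ) / m11)) := by
    convert tendsto_of_hasDerivAt_affine (by linarith : -m11 < 0) (hlim m11 hD11).neg
      (hρ.abs.const_add 1 |>.const_mul η)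
      ((eventually_gt_atTop 0).mono fun t ht =>
        hasDerivAt_inv_of_logistic (hz1' t ht) (hpos t ht.le)) using 2
    rw [abs_of_nonneg hρ0, neg_div_neg_eq]
  have hz1lim : Tendsto z1 atTop (𝓝 (m11 / η * (1 / (1 + ρ)))) := by
    convert hinv.inv₀ (by positivity) using 1
    · simp
    · field_simp
  refine ⟨hz1lim, (hρ.mul hz1lim).congr' ?_⟩
  filter_upwards [eventually_ge_atTop 0] with t ht
  exact div_mul_cancel₀ (z2 t) (hpos t ht).ne'

/-- Convergence of solutions of the asymptotically autonomous logistic matrix ODE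
`dz/dt = (M + 𝒟(t)) z − η ‖z‖₁ z`, where `M` is lower triangular with `m₁₁ > 0`,
`m₂₁ ≥ 0`, `m₂₂ < 0`, and the perturbation `𝒟(t)` is continuous, lower triangular,
and tends to `0` at infinity.  Any solution started in `(0,∞) × [0,∞)` converges to
`z̄₁ = (m₁₁/η)/(1 + m₂₁/(m₁₁ − m₂₂))`, `z̄₂ = (m₂₁/(m₁₁ − m₂₂)) z̄₁`. -/
theorem ode_convergence_perturbed
    (m11 m21 m22 η : ℝ) (hm11 : 0 < m11) (hm21 : 0 ≤ m21) (hm22 : m22 < 0) (hη : 0 < η)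
    (D11 D21 D22 : ℝ → ℝ)
    (hD11c : ContinuousOn D11 (Ici 0)) (hD21c : ContinuousOn D21 (Ici 0))
    (hD22c : ContinuousOn D22 (Ici 0))
    (hD11 : Tendsto D11 atTop (nhds 0)) (hD21 : Tendsto D21 atTop (nhds 0))
    (hD22 : Tendsto D22 atTop (nhds 0))
    (z1 z2 : ℝ → ℝ)
    (hz1 : ∀ t ∈ Ici (0:ℝ), HasDerivWithinAt z1
      ((m11 + D11 t) * z1 t - η * (|z1 t| + |z2 t|) * z1 t) (Ici 0) t)
    (hz2 : ∀ t ∈ Ici (0:ℝ), HasDerivWithinAt z2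
      ((m21 + D21 t) * z1 t + (m22 + D22 t) * z2 t - η * (|z1 t| + |z2 t|) * z2 t) (Ici 0) t)
    (h0 : 0 < z1 0) (h0' : 0 ≤ z2 0) :
    Tendsto z1 atTop (nhds ((m11 / η) * (1 / (1 + m21 / (m11 - m22))))) ∧
    Tendsto z2 atTop
      (nhds ((m21 / (m11 - m22)) * ((m11 / η) * (1 / (1 + m21 / (m11 - m22)))))) :=
  ode_convergence_perturbed_general m11 m21 m22 η hm11 hm21 hm22 hη D11 D21 D22 hD11c hD11 hD21 hD22
    z1 z2 hz1 hz2 h0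
end

section
/- Let m₁₁ > 0, m₂₁ ≥ 0, m₂₂ < 0, η > 0, and let M be the 2×2 lower-triangular matrix with entries M₁₁ = m₁₁, M₁₂ = 0, M₂₁ = m₂₁, M₂₂ = m₂₂. Then any differentiable solution y : [0,∞) → ℝ² of dy/dt = M y(t) − η (|y₁(t)| + |y₂(t)|) y(t) with y(0) ∈ (0,∞) × [0,∞) converges as t → ∞ to the vector z̄ given by z̄₁ = (m₁₁/η) · 1/(1 + m₂₁/(m₁₁ − m₂₂)) and z̄₂ = (m₂₁/(m₁₁ − m₂₂)) z̄₁. -/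
/-!
Multiplying the system by the integrating factor `w = exp (η ∫₀ᵗ ‖y‖₁)` turns it into the linear
lower-triangular system `z' = M z` for `z = w y`, which is solved explicitly. Its solution stays in
`(0,∞) × [0,∞)`, so `‖y‖₁ w = z₁ + z₂` and `w' = η (z₁ + z₂)` is a sum of two exponentials, integrated
explicitly as well. Both `z` and `w` then grow like `exp (m₁₁ t)`, and `y = z / w` converges to the
ratio of the leading coefficients.
-/

open Set Filter Topology Real

theorem hasDerivAt_const_mul_exp_mul (K c t : ℝ) :
    HasDerivAt (fun u => K * exp (c * u)) (c * (K * exp (c * t))) t := by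
  have h := ((hasDerivAt_id' t).const_mul c).exp.const_mul K
  rw [mul_one] at h
  exact h.congr_deriv (by ring)

theorem eqOn_Ici_of_hasDerivWithinAt_linear {a c : ℝ} {r f g : ℝ → ℝ}
    (hf : ∀ t ∈ Ici a, HasDerivWithinAt f (c * f t + r t) (Ici a) t)
    (hg : ∀ t ∈ Ici a, HasDerivWithinAt g (c * g t + r t) (Ici a) t)
    (ha : f a = g a) : EqOn f g (Ici a) := by
  have hlip : ∀ s, LipschitzWith ‖c‖₊ (fun x => c * x + r s) := fun s => by
    simpa using (lipschitzWith_smul c).add (LipschitzWith.const (r s))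
  intro t ht
  refine ODE_solution_unique hlip ?_ ?_ ?_ ?_ ha ⟨ht, le_rfl⟩
  · exact fun s hs => (hf s hs.1).continuousWithinAt.mono Icc_subset_Ici_self
  · exact fun s hs => (hf s hs.1).mono (Ici_subset_Ici.mpr hs.1)
  · exact fun s hs => (hg s hs.1).continuousWithinAt.mono Icc_subset_Ici_self
  · exact fun s hs => (hg s hs.1).mono (Ici_subset_Ici.mpr hs.1)

theorem eqOn_exp_mul_of_hasDerivWithinAt {c : ℝ} {f : ℝ → ℝ}
    (hf : ∀ t ∈ Ici 0, HasDerivWithinAt f (c * f t) (Ici 0) t) :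
    EqOn f (fun t => f 0 * exp (c * t)) (Ici 0) := by
  refine eqOn_Ici_of_hasDerivWithinAt_linear (c := c) (r := fun _ => 0) (fun t ht => ?_)
    (fun t _ => ?_) (by simp)
  · simpa using hf t ht
  · simpa using (hasDerivAt_const_mul_exp_mul (f 0) c t).hasDerivWithinAt

theorem eqOn_of_hasDerivWithinAt_lowerTriangular {a b d : ℝ} (had : a ≠ d) {f g : ℝ → ℝ}
    (hf : ∀ t ∈ Ici 0, HasDerivWithinAt f (a * f t) (Ici 0) t)
    (hg : ∀ t ∈ Ici 0, HasDerivWithinAt g (b * f t + d * g t) (Ici 0) t) :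
    EqOn g (fun t => b / (a - d) * f 0 * exp (a * t) + (g 0 - b / (a - d) * f 0) * exp (d * t))
      (Ici 0) := by
  have hf' := eqOn_exp_mul_of_hasDerivWithinAt hf
  refine eqOn_Ici_of_hasDerivWithinAt_linear (c := d) (r := fun t => b * f t) (fun t ht => ?_)
    (fun t ht => ?_) (by simp)
  · exact (hg t ht).congr_deriv (add_comm _ _)
  · refine ((hasDerivAt_const_mul_exp_mul _ a t).add
      (hasDerivAt_const_mul_exp_mul _ d t)).hasDerivWithinAt.congr_deriv ?_
    rw [hf' ht]
    field_simp [sub_ne_zero.mpr had]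
    ring

theorem lowerTriangular_solution_nonneg {a b d x y t : ℝ} (hda : d < a) (hb : 0 ≤ b)
    (hx : 0 ≤ x) (hy : 0 ≤ y) (ht : 0 ≤ t) :
    0 ≤ b / (a - d) * x * exp (a * t) + (y - b / (a - d) * x) * exp (d * t) := by
  have hk : 0 ≤ b / (a - d) := div_nonneg hb (sub_pos.mpr hda).le
  have hexp : exp (d * t) ≤ exp (a * t) := exp_le_exp.2 (by nlinarith)
  nlinarith [mul_nonneg (mul_nonneg hk hx) (sub_nonneg.2 hexp), mul_nonneg hy (exp_pos (d * t)).le]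

theorem eqOn_of_hasDerivWithinAt_exp_add_exp {p q A B : ℝ} (hp : p ≠ 0) (hq : q ≠ 0)
    {f : ℝ → ℝ} (hf : ∀ t ∈ Ici 0, HasDerivWithinAt f (A * exp (p * t) + B * exp (q * t)) (Ici 0) t) :
    EqOn f (fun t => A / p * exp (p * t) + B / q * exp (q * t) + (f 0 - A / p - B / q)) (Ici 0) := by
  refine eqOn_Ici_of_hasDerivWithinAt_linear (c := 0)
    (r := fun t => A * exp (p * t) + B * exp (q * t)) (fun t ht => ?_) (fun t ht => ?_) (by simp)
  · simpa using hf t ht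
  · refine (((hasDerivAt_const_mul_exp_mul _ p t).add
      (hasDerivAt_const_mul_exp_mul _ q t)).add_const _).hasDerivWithinAt.congr_deriv ?_
    field_simp
    ring

theorem tendsto_exp_mul_atTop_of_neg {p : ℝ} (hp : p < 0) :
    Tendsto (fun t => exp (p * t)) atTop (𝓝 0) :=
  tendsto_exp_atBot.comp (tendsto_id.const_mul_atTop_of_neg hp)

theorem tendsto_exp_add_exp_div {p q : ℝ} (hqp : q < p) (hp : 0 < p) (a b c d e : ℝ)
    (hc : c ≠ 0) :
    Tendsto (fun t => (a * exp (p * t) + b * exp (q * t)) /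
      (c * exp (p * t) + d * exp (q * t) + e)) atTop (𝓝 (a / c)) := by
  have h₁ := tendsto_exp_mul_atTop_of_neg (sub_neg.mpr hqp)
  have h₂ := tendsto_exp_mul_atTop_of_neg (neg_neg_of_pos hp)
  have hlim := ((tendsto_const_nhds (x := a)).add (h₁.const_mul b)).div
    (((tendsto_const_nhds (x := c)).add (h₁.const_mul d)).add (h₂.const_mul e)) (by simpa using hc)
  simp only [mul_zero, add_zero] at hlim
  refine hlim.congr fun t => ?_
  simp only [Pi.div_apply, sub_mul, neg_mul, exp_sub, exp_neg]
  rw [← mul_div_mul_right _ _ (exp_pos (p * t)).ne']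
  field_simp

theorem tendsto_of_mul_eq_exp_add_exp {p q : ℝ} (hqp : q < p) (hp : 0 < p) {y w : ℝ → ℝ}
    {a b c d e : ℝ} (hc : c ≠ 0) (hw₀ : ∀ t ∈ Ici 0, w t ≠ 0)
    (hw : ∀ t ∈ Ici 0, w t = c * exp (p * t) + d * exp (q * t) + e)
    (hy : ∀ t ∈ Ici 0, y t * w t = a * exp (p * t) + b * exp (q * t)) :
    Tendsto y atTop (𝓝 (a / c)) :=
  (tendsto_exp_add_exp_div hqp hp a b c d e hc).congr' <|
    (eventually_ge_atTop 0).mono fun t ht => by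
      rw [← hy t ht, ← hw t ht, mul_div_cancel_right₀ _ (hw₀ t ht)]

theorem exists_integratingFactor {n : ℝ → ℝ} {a : ℝ} (hn : ContinuousOn n (Ici a)) :
    ∃ w : ℝ → ℝ, (∀ t, 0 < w t) ∧ w a = 1 ∧
      ∀ t ∈ Ici a, HasDerivWithinAt w (n t * w t) (Ici a) t := by
  -- `n (max s a)` extends `n` continuously to all of `ℝ`, where the FTC for continuous integrands applies
  have hm : Continuous fun s => n (max s a) :=
    hn.comp_continuous (continuous_id.max continuous_const) fun s => le_max_right s a
  refine ⟨fun t => exp (∫ s in a..t, n (max s a)), fun t => exp_pos _, by simp, fun t ht => ?_⟩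
  have := (hm.integral_hasStrictDerivAt a t).hasDerivAt.exp.hasDerivWithinAt (s := Ici a)
  rwa [max_eq_left ht, mul_comm] at this

theorem HasDerivWithinAt.mul_integratingFactor {y w : ℝ → ℝ} {g n t : ℝ} {s : Set ℝ}
    (hy : HasDerivWithinAt y (g - n * y t) s t) (hw : HasDerivWithinAt w (n * w t) s t) :
    HasDerivWithinAt (fun u => y u * w u) (g * w t) s t :=
  (hy.mul hw).congr_deriv (by ring)

theorem mul_integratingFactor_eq_of_lowerTriangular {a b d : ℝ} (had : a ≠ d)
    {n y₁ y₂ w : ℝ → ℝ}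
    (hy₁ : ∀ t ∈ Ici 0, HasDerivWithinAt y₁ (a * y₁ t - n t * y₁ t) (Ici 0) t)
    (hy₂ : ∀ t ∈ Ici 0, HasDerivWithinAt y₂ (b * y₁ t + d * y₂ t - n t * y₂ t) (Ici 0) t)
    (hw : ∀ t ∈ Ici 0, HasDerivWithinAt w (n t * w t) (Ici 0) t) (hw₀ : w 0 = 1) :
    ∀ t ∈ Ici 0, y₁ t * w t = y₁ 0 * exp (a * t) ∧
      y₂ t * w t = b / (a - d) * y₁ 0 * exp (a * t) + (y₂ 0 - b / (a - d) * y₁ 0) * exp (d * t) := by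
  have hz₁ : ∀ t ∈ Ici 0, HasDerivWithinAt (fun u => y₁ u * w u) (a * (y₁ t * w t)) (Ici 0) t :=
    fun t ht => ((hy₁ t ht).mul_integratingFactor (hw t ht)).congr_deriv (mul_assoc _ _ _)
  have hz₂ : ∀ t ∈ Ici 0, HasDerivWithinAt (fun u => y₂ u * w u)
      (b * (y₁ t * w t) + d * (y₂ t * w t)) (Ici 0) t :=
    fun t ht => ((hy₂ t ht).mul_integratingFactor (hw t ht)).congr_deriv (by ring)
  intro t ht
  constructor
  · simpa [hw₀] using eqOn_exp_mul_of_hasDerivWithinAt hz₁ ht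
  · simpa [hw₀] using eqOn_of_hasDerivWithinAt_lowerTriangular had hz₁ hz₂ ht

/-- Convergence of solutions of the autonomous logistic matrix ODE
`dy/dt = M y − η ‖y‖₁ y`, where `M` is lower triangular with `m₁₁ > 0`, `m₂₁ ≥ 0`,
`m₂₂ < 0`.  Any solution started in `(0,∞) × [0,∞)` converges to
`z̄₁ = (m₁₁/η)/(1 + m₂₁/(m₁₁ − m₂₂))`, `z̄₂ = (m₂₁/(m₁₁ − m₂₂)) z̄₁`. -/
theorem ode_convergence_autonomous
    (m11 m21 m22 η : ℝ) (hm11 : 0 < m11) (hm21 : 0 ≤ m21) (hm22 : m22 < 0) (hη : 0 < η)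
    (y1 y2 : ℝ → ℝ)
    (hy1 : ∀ t ∈ Ici (0:ℝ), HasDerivWithinAt y1
      (m11 * y1 t - η * (|y1 t| + |y2 t|) * y1 t) (Ici 0) t)
    (hy2 : ∀ t ∈ Ici (0:ℝ), HasDerivWithinAt y2
      (m21 * y1 t + m22 * y2 t - η * (|y1 t| + |y2 t|) * y2 t) (Ici 0) t)
    (h0 : 0 < y1 0) (h0' : 0 ≤ y2 0) :
    Tendsto y1 atTop (nhds ((m11 / η) * (1 / (1 + m21 / (m11 - m22))))) ∧
    Tendsto y2 atTop
      (nhds ((m21 / (m11 - m22)) * ((m11 / η) * (1 / (1 + m21 / (m11 - m22)))))) := by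
  have hm : m22 < m11 := by linarith
  have hn : ContinuousOn (fun t => η * (|y1 t| + |y2 t|)) (Ici 0) :=
    continuousOn_const.mul ((fun t ht => (hy1 t ht).continuousWithinAt.abs.add
      (hy2 t ht).continuousWithinAt.abs))
  obtain ⟨w, hw_pos, hw₀, hw⟩ := exists_integratingFactor hn
  have hz := mul_integratingFactor_eq_of_lowerTriangular hm.ne' hy1 hy2 hw hw₀
  set k := m21 / (m11 - m22)
  have hy1_pos : ∀ t ∈ Ici (0:ℝ), 0 < y1 t := fun t ht =>
    pos_of_mul_pos_left (a := y1 t) (by rw [(hz t ht).1]; positivity) (hw_pos t).le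
  have hy2_nonneg : ∀ t ∈ Ici (0:ℝ), 0 ≤ y2 t := fun t ht =>
    nonneg_of_mul_nonneg_left (b := w t)
      ((hz t ht).2 ▸ lowerTriangular_solution_nonneg hm hm21 h0.le h0' ht) (hw_pos t)
  have hw' : ∀ t ∈ Ici (0:ℝ), HasDerivWithinAt w (η * ((1 + k) * y1 0) * exp (m11 * t) +
      η * (y2 0 - k * y1 0) * exp (m22 * t)) (Ici 0) t := fun t ht => by
    refine (hw t ht).congr_deriv ?_
    rw [abs_of_pos (hy1_pos t ht), abs_of_nonneg (hy2_nonneg t ht)]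
    linear_combination η * ((hz t ht).1 + (hz t ht).2)
  have hW := eqOn_of_hasDerivWithinAt_exp_add_exp hm11.ne' hm22.ne hw'
  have hk : 0 ≤ k := div_nonneg hm21 (sub_pos.mpr hm).le
  have hC : η * ((1 + k) * y1 0) / m11 ≠ 0 := by positivity
  have hw_ne : ∀ t ∈ Ici (0:ℝ), w t ≠ 0 := fun t _ => (hw_pos t).ne'
  constructor
  · convert tendsto_of_mul_eq_exp_add_exp hm hm11 hC hw_ne hW
      (b := 0) fun t ht => by simpa using (hz t ht).1 using 2
    field_simp
  · convert tendsto_of_mul_eq_exp_add_exp hm hm11 hC hw_ne hW fun t ht => (hz t ht).2 using 2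
    field_simp
end

section
/- Let m₁₁ > 0, m₂₁ ≥ 0, m₂₂ < 0, and let M be the 2×2 lower-triangular matrix with entries M₁₁ = m₁₁, M₁₂ = 0, M₂₁ = m₂₁, M₂₂ = m₂₂. Then for every v ∈ ℝ² with v₁ > 0, e^{−m₁₁ t} exp(tM) v converges as t → ∞ to v₁ · (1, m₂₁/(m₁₁ − m₂₂)); in particular the limit is a positive multiple of the eigenvector (1, m₂₁/(m₁₁ − m₂₂)) of M associated with the eigenvalue m₁₁. -/
open Filter Matrix Topology

/-!
With `k = m₂₁ / (m₁₁ - m₂₂)`, the shear `P = [[1, 0], [k, 1]]` conjugates `M` to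
`diag(m₁₁, m₂₂)`, so `exp(tM)` is explicit. After the rescaling by `e^{-m₁₁ t}` the only
dependence on `t` is through `e^{(m₂₂ - m₁₁) t} → 0`, and `e^{-m₁₁ t} exp(tM)` tends to the
rank-one matrix `[[1, 0], [k, 0]]`, which sends `v` to `v₁ • (1, k)`.
-/

/-- Writing the lower-left entry as `k * (a - b)` needs no hypothesis `a ≠ b` and makes `(1, k)`
the eigenvector for `a`. -/
theorem exp_lowerTriangular_fin_two (a b k : ℝ) :
    NormedSpace.exp !![a, 0; k * (a - b), b] =
      !![Real.exp a, 0; k * (Real.exp a - Real.exp b), Real.exp b] := by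
  set P : Matrix (Fin 2) (Fin 2) ℝ := !![1, 0; k, 1]
  have hP : P * !![1, 0; -k, 1] = 1 := by
    ext i j; fin_cases i <;> fin_cases j <;> simp [P]
  have hPinv : P⁻¹ = !![1, 0; -k, 1] := inv_eq_right_inv hP
  have hconj : !![a, 0; k * (a - b), b] = P * diagonal ![a, b] * P⁻¹ := by
    rw [hPinv, diagonal_vec2]
    ext i j; fin_cases i <;> fin_cases j <;> simp [P]; ring
  have hexp : NormedSpace.exp ![a, b] = ![Real.exp a, Real.exp b] := by
    ext i; fin_cases i <;> simp [Real.exp_eq_exp_ℝ]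
  rw [hconj, exp_conj _ _ (.of_mul_eq_one _ hP), exp_diagonal, hexp, hPinv, diagonal_vec2]
  ext i j; fin_cases i <;> fin_cases j <;> simp [P]; ring

theorem exp_neg_mul_smul_exp_smul_lowerTriangular (a b k t : ℝ) :
    Real.exp (-a * t) • NormedSpace.exp (t • !![a, 0; k * (a - b), b]) =
      !![1, 0; k * (1 - Real.exp ((b - a) * t)), Real.exp ((b - a) * t)] := by
  have hsmul : t • !![a, 0; k * (a - b), b] = !![t * a, 0; k * (t * a - t * b), t * b] := by
    ext i j; fin_cases i <;> fin_cases j <;> simp; ring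
  have hcancel : Real.exp (-(a * t)) * Real.exp (t * a) = 1 := by
    rw [← Real.exp_add, neg_add_eq_zero.2 (mul_comm a t), Real.exp_zero]
  have hsplit : Real.exp ((b - a) * t) = Real.exp (-(a * t)) * Real.exp (t * b) := by
    rw [← Real.exp_add]; ring_nf
  rw [hsmul, exp_lowerTriangular_fin_two, hsplit]
  ext i j; fin_cases i <;> fin_cases j <;> simp
  · exact hcancel
  · linear_combination k * hcancel

theorem tendsto_exp_neg_mul_smul_exp_smul_lowerTriangular {a b : ℝ} (hba : b < a) (k : ℝ) :
    Tendsto (fun t : ℝ => Real.exp (-a * t) • NormedSpace.exp (t • !![a, 0; k * (a - b), b]))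
      atTop (𝓝 !![1, 0; k, 0]) := by
  have hdecay : Tendsto (fun t : ℝ => Real.exp ((b - a) * t)) atTop (𝓝 0) :=
    Real.tendsto_exp_atBot.comp (tendsto_id.const_mul_atTop_of_neg (sub_neg.2 hba))
  have hcont : Continuous fun s : ℝ => !![1, 0; k * (1 - s), s] := by fun_prop
  simp_rw [exp_neg_mul_smul_exp_smul_lowerTriangular]
  have h := (hcont.tendsto 0).comp hdecay
  rwa [sub_zero, mul_one] at h

theorem lowerTriangular_mulVec_eigenvector (a b k : ℝ) :
    !![a, 0; k * (a - b), b] *ᵥ ![1, k] = a • ![1, k] := by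
  ext i; fin_cases i <;> simp; ring

theorem matrix_exp_convergence_general
    (m11 m21 m22 : ℝ) (hm11 : 0 < m11) (hm22 : m22 < 0)
    (v : Fin 2 → ℝ) :
    Tendsto
      (fun t : ℝ => Real.exp (-m11 * t) •
        (NormedSpace.exp (t • (!![m11, 0; m21, m22] : Matrix (Fin 2) (Fin 2) ℝ))).mulVec v)
      atTop (nhds (v 0 • ![1, m21 / (m11 - m22)])) ∧
    (!![m11, 0; m21, m22] : Matrix (Fin 2) (Fin 2) ℝ).mulVec ![1, m21 / (m11 - m22)]
      = m11 • ![1, m21 / (m11 - m22)] := by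
  have hlt : m22 < m11 := hm22.trans hm11
  set k := m21 / (m11 - m22)
  have hM : !![m11, 0; m21, m22] = !![m11, 0; k * (m11 - m22), m22] := by
    rw [div_mul_cancel₀ _ (sub_pos.2 hlt).ne']
  rw [hM]
  refine ⟨?_, lowerTriangular_mulVec_eigenvector m11 m22 k⟩
  have hrankOne : !![1, 0; k, 0] *ᵥ v = v 0 • ![1, k] := by
    ext i; fin_cases i <;> simp [vecHead, mul_comm]
  simp_rw [← smul_mulVec, ← hrankOne]
  exact ((continuous_id.matrix_mulVec continuous_const).tendsto _).comp
    (tendsto_exp_neg_mul_smul_exp_smul_lowerTriangular hlt k)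

/-- For the lower-triangular matrix `M = [[m₁₁, 0], [m₂₁, m₂₂]]` with `m₁₁ > 0`, `m₂₁ ≥ 0`,
`m₂₂ < 0`, and any `v` with `v₁ > 0`, `e^{−m₁₁ t} exp(tM) v` converges as `t → ∞` to
`v₁ • (1, m₂₁/(m₁₁ − m₂₂))`, which is a positive multiple of the eigenvector
`(1, m₂₁/(m₁₁ − m₂₂))` of `M` for the eigenvalue `m₁₁`. -/
theorem matrix_exp_convergence
    (m11 m21 m22 : ℝ) (hm11 : 0 < m11) (hm21 : 0 ≤ m21) (hm22 : m22 < 0)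
    (v : Fin 2 → ℝ) (hv : 0 < v 0) :
    Tendsto
      (fun t : ℝ => Real.exp (-m11 * t) •
        (NormedSpace.exp (t • (!![m11, 0; m21, m22] : Matrix (Fin 2) (Fin 2) ℝ))).mulVec v)
      atTop (nhds (v 0 • ![1, m21 / (m11 - m22)])) ∧
    (!![m11, 0; m21, m22] : Matrix (Fin 2) (Fin 2) ℝ).mulVec ![1, m21 / (m11 - m22)]
      = m11 • ![1, m21 / (m11 - m22)] :=
  matrix_exp_convergence_general m11 m21 m22 hm11 hm22 v
end

section
/- Let x ∈ 𝒱, λ = λ(x), and define F₂₁ = ∫₀^∞ 1_{x_d < a ≤ x_b} e^{−λa − max(a−x_d,0)} da and F₂₂ = ∫₀^{x_b} e^{−(1+λ)a} da. Then F₂₂ < 1, and the functions N¹(a) = e^{−(λa + max(a−x_d,0))} and N²(a) = (F₂₁/(1−F₂₂)) e^{−(1+λ)a} satisfy: (a) for every a > 0 with a ≠ x_d, (N¹)′(a) = −(1_{a>x_d} + λ) N¹(a), and for every a > 0, (N²)′(a) = −(1+λ) N²(a); (b) the boundary conditions N¹(0) = ∫₀^{min(x_b,x_d)} N¹(a) da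 and N²(0) = ∫₀^∞ 1_{x_d < a ≤ x_b} N¹(a) da + ∫₀^{x_b} N²(a) da. Hence N = (N¹, N²) is an eigenvector of the age-structured transport operator associated with the eigenvalue λ(x). -/
open MeasureTheory Set Filter

noncomputable section

/-- First component of the stable age distribution: `N¹(a) = e^{−(λa + max(a−x_d,0))}`. -/
def N1 (lam : ℝ × ℝ → ℝ) (x : ℝ × ℝ) (a : ℝ) : ℝ :=
  Real.exp (-(lam x * a + max (a - x.2) 0))

/-- `F₂₁ = ∫₀^∞ 1_{x_d < a ≤ x_b} e^{−λa − max(a−x_d,0)} da`. -/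
def F21 (lam : ℝ × ℝ → ℝ) (x : ℝ × ℝ) : ℝ :=
  ∫ a in Ioi (0:ℝ),
    if x.2 < a ∧ a ≤ x.1 then Real.exp (-(lam x) * a - max (a - x.2) 0) else 0

/-- `F₂₂ = ∫₀^{x_b} e^{−(1+λ)a} da`. -/
def F22 (lam : ℝ × ℝ → ℝ) (x : ℝ × ℝ) : ℝ :=
  ∫ a in (0:ℝ)..x.1, Real.exp (-(1 + lam x) * a)

/-- Second component of the stable age distribution:
`N²(a) = (F₂₁/(1−F₂₂)) e^{−(1+λ)a}`. -/
def N2 (lam : ℝ × ℝ → ℝ) (x : ℝ × ℝ) (a : ℝ) : ℝ :=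
  (F21 lam x / (1 - F22 lam x)) * Real.exp (-(1 + lam x) * a)

/-! The exponent of `N¹` is piecewise linear with a single kink at `x_d`, and on
`[0, min x_b x_d]` it is `-λa`, which turns the first boundary condition into the Malthusian
equation. The second boundary condition is the fixed-point equation `k = F₂₁ + k F₂₂` for
`k = F₂₁ / (1 - F₂₂)`, solvable since `F₂₂ = (1 - e^{-(1+λ)x_b}) / (1 + λ) < 1`. -/

theorem integral_exp_neg_mul_s13 (c b : ℝ) (hc : c ≠ 0) :
    ∫ a in (0:ℝ)..b, Real.exp (-c * a) = (1 - Real.exp (-c * b)) / c := by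
  rw [intervalIntegral.integral_comp_mul_left (fun a => Real.exp a) (neg_ne_zero.2 hc),
    integral_exp, mul_zero, Real.exp_zero, smul_eq_mul]
  field_simp
  ring

theorem integral_exp_neg_mul_lt_one {c : ℝ} (b : ℝ) (hc : 1 ≤ c) :
    ∫ a in (0:ℝ)..b, Real.exp (-c * a) < 1 := by
  rw [integral_exp_neg_mul_s13 c b (by positivity), div_lt_one (by positivity)]
  linarith [Real.exp_pos (-c * b)]

theorem hasDerivAt_max_sub_zero {d a : ℝ} (h : a ≠ d) :
    HasDerivAt (fun b => max (b - d) 0) (if d < a then 1 else 0) a := by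
  rcases h.lt_or_gt with h | h
  · have heq : (fun b => max (b - d) 0) =ᶠ[nhds a] fun _ => (0 : ℝ) := by
      filter_upwards [eventually_lt_nhds h] with b hb
      exact max_eq_right (by linarith)
    simpa [not_lt.2 h.le] using (hasDerivAt_const a (0 : ℝ)).congr_of_eventuallyEq heq
  · have heq : (fun b => max (b - d) 0) =ᶠ[nhds a] fun b => b - d := by
      filter_upwards [eventually_gt_nhds h] with b hb
      exact max_eq_left (by linarith)
    simpa [h] using ((hasDerivAt_id a).sub_const d).congr_of_eventuallyEq heq

section StableAgeDistribution

variable (lam : ℝ × ℝ → ℝ) (x : ℝ × ℝ)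

theorem hasDerivAt_N1 {a : ℝ} (h : a ≠ x.2) :
    HasDerivAt (N1 lam x) (-((if x.2 < a then (1:ℝ) else 0) + lam x) * N1 lam x a) a := by
  have h' := (((hasDerivAt_id a).const_mul (lam x)).add (hasDerivAt_max_sub_zero h)).neg.exp
  exact h'.congr_deriv (by simp only [N1, id, Pi.add_apply, Pi.neg_apply]; ring)

theorem hasDerivAt_N2 (a : ℝ) : HasDerivAt (N2 lam x) (-(1 + lam x) * N2 lam x a) a := by
  have h := (((hasDerivAt_id a).const_mul (-(1 + lam x))).exp).const_mul
    (F21 lam x / (1 - F22 lam x))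
  exact h.congr_deriv (by simp only [N2, id]; ring)

theorem N1_of_le {a : ℝ} (h : a ≤ x.2) : N1 lam x a = Real.exp (-lam x * a) := by
  rw [N1, max_eq_right (by linarith), add_zero, neg_mul]

theorem N1_zero_eq_integral (h0 : 0 ≤ min x.1 x.2)
    (hint : ∫ a in (0:ℝ)..(min x.1 x.2), Real.exp (-(lam x) * a) = 1) :
    N1 lam x 0 = ∫ a in (0:ℝ)..(min x.1 x.2), N1 lam x a := by
  rw [N1_of_le lam x (h0.trans (min_le_right _ _)), mul_zero, Real.exp_zero, ← hint]
  refine intervalIntegral.integral_congr fun a ha => ?_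
  rw [uIcc_of_le h0] at ha
  exact (N1_of_le lam x (ha.2.trans (min_le_right _ _))).symm

theorem integral_birth_N1_eq_F21 :
    (∫ a in Ioi (0:ℝ), if x.2 < a ∧ a ≤ x.1 then N1 lam x a else 0) = F21 lam x := by
  simp only [N1, F21, neg_add, neg_mul, sub_eq_add_neg]

theorem N2_zero_eq_births (h : F22 lam x ≠ 1) :
    N2 lam x 0 =
      (∫ a in Ioi (0:ℝ), if x.2 < a ∧ a ≤ x.1 then N1 lam x a else 0) +
        ∫ a in (0:ℝ)..x.1, N2 lam x a := by
  have h' : 1 - F22 lam x ≠ 0 := sub_ne_zero.2 h.symm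
  simp only [integral_birth_N1_eq_F21, N2, intervalIntegral.integral_const_mul, mul_zero,
    Real.exp_zero, mul_one]
  rw [← F22]
  field_simp
  ring

end StableAgeDistribution

/-- `(N¹, N²)` is an eigenvector of the age-structured transport operator for the
eigenvalue `λ(x)`: `F₂₂ < 1`, the ODEs `(N¹)′ = −(1_{a>x_d} + λ)N¹` (away from `x_d`) and
`(N²)′ = −(1+λ)N²` hold, together with the birth boundary conditions. -/
theorem stable_age_distribution_eigenvector (lam : ℝ × ℝ → ℝ) (hlam : IsMalthusian lam)
    (x : ℝ × ℝ) (hx : x ∈ viable) :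
    F22 lam x < 1 ∧
    (∀ a : ℝ, 0 < a → a ≠ x.2 →
      HasDerivAt (N1 lam x) (-((if x.2 < a then (1:ℝ) else 0) + lam x) * N1 lam x a) a) ∧
    (∀ a : ℝ, 0 < a →
      HasDerivAt (N2 lam x) (-(1 + lam x) * N2 lam x a) a) ∧
    N1 lam x 0 = (∫ a in (0:ℝ)..(min x.1 x.2), N1 lam x a) ∧
    N2 lam x 0 =
      (∫ a in Ioi (0:ℝ), if x.2 < a ∧ a ≤ x.1 then N1 lam x a else 0) +
        ∫ a in (0:ℝ)..x.1, N2 lam x a := by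
  obtain ⟨hpos, hint⟩ := hlam x hx
  have hF22 : F22 lam x < 1 := integral_exp_neg_mul_lt_one x.1 (by linarith)
  have hmin : (0:ℝ) ≤ min x.1 x.2 := zero_le_one.trans (le_of_lt hx)
  exact ⟨hF22, fun a _ ha => hasDerivAt_N1 lam x ha, fun a _ => hasDerivAt_N2 lam x a,
    N1_zero_eq_integral lam x hmin hint, N2_zero_eq_births lam x hF22.ne⟩
end
end

section
/- Fix η > 0. For x ∈ 𝒱 define u₁(x) = ∫₀^∞ e^{−max(a−x_d,0) − λ(x)a} da, u₂(x) = ∫₀^∞ e^{−(1+λ(x))a} da = 1/(1+λ(x)), F₂₁(x) = ∫₀^∞ 1_{x_d<a≤x_b} e^{−λ(x)a − max(a−x_d,0)} da and F₂₂(x) = ∫₀^{x_b} e^{−(1+λ(x))a} da. Then the map x ↦ n̄¹_x(0) := (λ(x)/η) · 1/(u₁(x) + u₂(x) · F₂₁(x)/(1 − F₂₂(x))) is continuous and bounded on 𝒱. -/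
open MeasureTheory Set Filter

noncomputable section

/-- `u₁(x) = ∫₀^∞ e^{−max(a−x_d,0) − λ(x)a} da`. -/
def u1 (lam : ℝ × ℝ → ℝ) (x : ℝ × ℝ) : ℝ :=
  ∫ a in Ioi (0:ℝ), Real.exp (-max (a - x.2) 0 - lam x * a)

/-- `u₂(x) = ∫₀^∞ e^{−(1+λ(x))a} da`. -/
def u2 (lam : ℝ × ℝ → ℝ) (x : ℝ × ℝ) : ℝ :=
  ∫ a in Ioi (0:ℝ), Real.exp (-(1 + lam x) * a)

/-- The stationary boundary value
`n̄¹_x(0) = (λ(x)/η) / (u₁(x) + u₂(x) F₂₁(x)/(1−F₂₂(x)))`. -/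
def nbar0 (lam : ℝ × ℝ → ℝ) (η : ℝ) (x : ℝ × ℝ) : ℝ :=
  (lam x / η) * (1 / (u1 lam x + u2 lam x * (F21 lam x / (1 - F22 lam x))))

/-!
The Malthusian parameter solves `∫₀^{min(x_b,x_d)} e^{-ca} da = 1`, whose left side is strictly
decreasing in `c` and continuous in `x`; a level set of such a family is a continuous graph, so `λ`
is continuous on `𝒱`. Each of `u₁, u₂, F₂₁, F₂₂` has an explicit closed form in `λ(x), x_b, x_d`,
which gives continuity of `n̄¹_x(0)`. For the bound, `u₁(x) ≥ ∫₀^{x_d} e^{-λa} da ≥ 1` while the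
second summand of the denominator is nonnegative, and `λ = 1 - e^{-λ min(x_b,x_d)} < 1`; hence
`0 ≤ n̄¹_x(0) ≤ λ(x)/|η| ≤ 1/|η|`.
-/

open Real

theorem integral_exp_mul {c : ℝ} (hc : c ≠ 0) (a b : ℝ) :
    ∫ x in a..b, exp (c * x) = (exp (c * b) - exp (c * a)) / c := by
  rw [intervalIntegral.integral_comp_mul_left (fun x => exp x) hc, integral_exp, smul_eq_mul,
    inv_mul_eq_div]

theorem strictAnti_integral_exp_neg_mul {m : ℝ} (hm : 0 < m) :
    StrictAnti fun c : ℝ => ∫ a in (0:ℝ)..m, exp (-c * a) := by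
  intro c₁ c₂ hc
  refine intervalIntegral.integral_lt_integral_of_continuousOn_of_le_of_exists_lt hm
    (by fun_prop) (by fun_prop) (fun a ha => ?_) ⟨m, ⟨hm.le, le_rfl⟩, ?_⟩
  · exact exp_le_exp.2 (by nlinarith [ha.1])
  · exact exp_lt_exp.2 (by nlinarith)

theorem continuousOn_of_apply_eq_of_strictAnti {X : Type*} [TopologicalSpace X] {s : Set X}
    {g : X → ℝ → ℝ} {l : X → ℝ} {y : ℝ} (hg : ∀ c, ContinuousOn (fun x => g x c) s)
    (hanti : ∀ x ∈ s, StrictAnti (g x)) (hl : ∀ x ∈ s, g x (l x) = y) : ContinuousOn l s := by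
  intro x₀ hx₀
  refine tendsto_order.2 ⟨fun a ha => ?_, fun b hb => ?_⟩
  · have hy : y < g x₀ a := hl x₀ hx₀ ▸ hanti x₀ hx₀ ha
    filter_upwards [(hg a x₀ hx₀).eventually (lt_mem_nhds hy), self_mem_nhdsWithin]
      with x hxa hx
    exact (hanti x hx).lt_iff_gt.1 (hl x hx ▸ hxa)
  · have hy : g x₀ b < y := hl x₀ hx₀ ▸ hanti x₀ hx₀ hb
    filter_upwards [(hg b x₀ hx₀).eventually (gt_mem_nhds hy), self_mem_nhdsWithin]
      with x hxb hx
    exact (hanti x hx).lt_iff_gt.1 (hl x hx ▸ hxb)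

section ClosedForms

variable {lam : ℝ × ℝ → ℝ} {x : ℝ × ℝ}

theorem u2_eq (h : 0 < 1 + lam x) : u2 lam x = 1 / (1 + lam x) := by
  rw [u2, integral_exp_mul_Ioi (by linarith), mul_zero, exp_zero, neg_div, div_neg, neg_neg]

theorem F22_eq (h : 1 + lam x ≠ 0) :
    F22 lam x = (1 - exp (-(1 + lam x) * x.1)) / (1 + lam x) := by
  rw [F22, integral_exp_mul (neg_ne_zero.2 h), mul_zero, exp_zero, div_neg, ← neg_div, neg_sub]

theorem u1_eq (hl : 0 < lam x) (hd : 0 ≤ x.2) :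
    u1 lam x = (1 - exp (-lam x * x.2)) / lam x + exp (-lam x * x.2) / (1 + lam x) := by
  have hbefore : EqOn (fun a => exp (-max (a - x.2) 0 - lam x * a))
      (fun a => exp (-lam x * a)) (Ioc 0 x.2) := fun a ha => by
    simp only [max_eq_right (sub_nonpos.2 ha.2)]
    ring_nf
  have hafter : EqOn (fun a => exp (-max (a - x.2) 0 - lam x * a))
      (fun a => exp x.2 * exp (-(1 + lam x) * a)) (Ioi x.2) := fun a ha => by
    simp only [max_eq_left (sub_nonneg.2 (mem_Ioi.1 ha).le), ← exp_add]
    ring_nf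
  have hint_after : IntegrableOn (fun a => exp (-max (a - x.2) 0 - lam x * a)) (Ioi x.2) :=
    IntegrableOn.congr_fun ((exp_neg_integrableOn_Ioi x.2 (b := 1 + lam x) (by linarith)).const_mul
      (exp x.2)) hafter.symm measurableSet_Ioi
  rw [u1, ← Ioc_union_Ioi_eq_Ioi hd, setIntegral_union (Ioc_disjoint_Ioi le_rfl) measurableSet_Ioi
      (by fun_prop : Continuous _).integrableOn_Ioc hint_after,
    setIntegral_congr_fun measurableSet_Ioc hbefore, setIntegral_congr_fun measurableSet_Ioi hafter,
    ← intervalIntegral.integral_of_le hd, integral_exp_mul (neg_ne_zero.2 hl.ne'),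
    integral_const_mul, integral_exp_mul_Ioi (by linarith), mul_zero, exp_zero]
  congr 1
  · rw [div_neg, ← neg_div, neg_sub]
  · rw [mul_div_assoc', div_neg, ← neg_div, mul_neg, neg_neg, ← exp_add]
    ring_nf

theorem F21_eq (hl : 1 + lam x ≠ 0) (hd : 0 ≤ x.2) :
    F21 lam x = exp x.2 *
      ((exp (-(1 + lam x) * x.2) - exp (-(1 + lam x) * max x.1 x.2)) / (1 + lam x)) := by
  -- `Ioc x.2 (max x.1 x.2) = Ioc x.2 x.1`, written so that `x.2 ≤ max x.1 x.2` for `integral_of_le`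
  have hind : (fun a => if x.2 < a ∧ a ≤ x.1 then exp (-(lam x) * a - max (a - x.2) 0) else 0)
      = (Ioc x.2 (max x.1 x.2)).indicator (fun a => exp x.2 * exp (-(1 + lam x) * a)) := by
    funext a
    have hmem : a ∈ Ioc x.2 (max x.1 x.2) ↔ x.2 < a ∧ a ≤ x.1 := by
      rw [mem_Ioc, le_max_iff]
      constructor
      · rintro ⟨hlt, hle | hle⟩
        exacts [⟨hlt, hle⟩, absurd hle hlt.not_ge]
      · exact fun h => ⟨h.1, Or.inl h.2⟩
    simp only [indicator, hmem]
    split_ifs with h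
    · rw [max_eq_left (sub_nonneg.2 h.1.le), ← exp_add]
      ring_nf
    · rfl
  have hsub : Ioc x.2 (max x.1 x.2) ⊆ Ioi 0 := fun a ha => hd.trans_lt ha.1
  rw [F21, hind, integral_indicator measurableSet_Ioc, Measure.restrict_restrict measurableSet_Ioc,
    inter_eq_self_of_subset_left hsub, ← intervalIntegral.integral_of_le (le_max_right _ _),
    intervalIntegral.integral_const_mul, integral_exp_mul (neg_ne_zero.2 hl),
    div_neg, ← neg_div, neg_sub]

theorem F21_nonneg : 0 ≤ F21 lam x :=
  setIntegral_nonneg measurableSet_Ioi fun _ _ => by split_ifs <;> positivity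

theorem F22_lt_one (hl : 0 ≤ lam x) : F22 lam x < 1 := by
  rw [F22_eq (by linarith), div_lt_one (by linarith)]
  linarith [exp_pos (-(1 + lam x) * x.1)]

end ClosedForms

namespace IsMalthusian

variable {lam : ℝ × ℝ → ℝ}

theorem continuousOn (hlam : IsMalthusian lam) : ContinuousOn lam viable := by
  refine continuousOn_of_apply_eq_of_strictAnti (y := 1)
    (g := fun x c => ∫ a in (0:ℝ)..min x.1 x.2, exp (-c * a)) (fun c => ?_)
    (fun x hx => strictAnti_integral_exp_neg_mul (zero_lt_one.trans hx))
    (fun x hx => (hlam x hx).2)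
  exact ((intervalIntegral.continuous_primitive
    (fun a b => (by fun_prop : Continuous fun t : ℝ => exp (-c * t)).intervalIntegrable a b)
    0).comp (continuous_fst.min continuous_snd)).continuousOn

theorem exp_neg_mul_min_eq (hlam : IsMalthusian lam) {x : ℝ × ℝ} (hx : x ∈ viable) :
    exp (-lam x * min x.1 x.2) = 1 - lam x := by
  obtain ⟨hpos, hint⟩ := hlam x hx
  rw [integral_exp_mul (neg_ne_zero.2 hpos.ne'), mul_zero, exp_zero,
    div_eq_one_iff_eq (neg_ne_zero.2 hpos.ne')] at hint
  linarith

theorem lt_one (hlam : IsMalthusian lam) {x : ℝ × ℝ} (hx : x ∈ viable) : lam x < 1 := by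
  linarith [hlam.exp_neg_mul_min_eq hx, exp_pos (-lam x * min x.1 x.2)]

theorem one_le_u1 (hlam : IsMalthusian lam) {x : ℝ × ℝ} (hx : x ∈ viable) : 1 ≤ u1 lam x := by
  obtain ⟨hl, -⟩ := hlam x hx
  have hd : 1 < x.2 := (lt_min_iff.1 hx).2
  have hexp : exp (-lam x * x.2) ≤ 1 - lam x :=
    hlam.exp_neg_mul_min_eq hx ▸ exp_le_exp.2 (by nlinarith [min_le_right x.1 x.2])
  have hfirst : 1 ≤ (1 - exp (-lam x * x.2)) / lam x := by
    rw [le_div_iff₀ hl]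
    linarith
  rw [u1_eq hl (by linarith)]
  linarith [show 0 ≤ exp (-lam x * x.2) / (1 + lam x) by positivity]

theorem one_le_denom (hlam : IsMalthusian lam) {x : ℝ × ℝ} (hx : x ∈ viable) :
    1 ≤ u1 lam x + u2 lam x * (F21 lam x / (1 - F22 lam x)) := by
  obtain ⟨hl, -⟩ := hlam x hx
  have hcorr : 0 ≤ u2 lam x * (F21 lam x / (1 - F22 lam x)) := by
    rw [u2_eq (by linarith)]
    exact mul_nonneg (by positivity) (div_nonneg F21_nonneg (sub_nonneg.2 (F22_lt_one hl.le).le))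
  linarith [hlam.one_le_u1 hx]

theorem continuousOn_denom (hlam : IsMalthusian lam) :
    ContinuousOn (fun x => u1 lam x + u2 lam x * (F21 lam x / (1 - F22 lam x))) viable := by
  have hlc := hlam.continuousOn
  have hl : ∀ x ∈ viable, 0 < lam x := fun x hx => (hlam x hx).1
  have hd : ∀ x ∈ viable, 0 ≤ x.2 := fun x hx => zero_le_one.trans (lt_min_iff.1 hx).2.le
  have hu1 : ContinuousOn (u1 lam) viable :=
    ContinuousOn.congr
      (by fun_prop (disch := exact fun x hx => ne_of_gt (by linarith [hl x hx])))
      fun x hx => u1_eq (hl x hx) (hd x hx)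
  have hu2 : ContinuousOn (u2 lam) viable :=
    ContinuousOn.congr
      (by fun_prop (disch := exact fun x hx => ne_of_gt (by linarith [hl x hx])))
      fun x hx => u2_eq (by linarith [hl x hx])
  have hF21 : ContinuousOn (F21 lam) viable :=
    ContinuousOn.congr
      (by fun_prop (disch := exact fun x hx => ne_of_gt (by linarith [hl x hx])))
      fun x hx => F21_eq (by linarith [hl x hx]) (hd x hx)
  have hF22 : ContinuousOn (F22 lam) viable :=
    ContinuousOn.congr
      (by fun_prop (disch := exact fun x hx => ne_of_gt (by linarith [hl x hx])))
      fun x hx => F22_eq (by linarith [hl x hx])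
  exact hu1.add (hu2.mul (hF21.div (continuousOn_const.sub hF22)
    fun x hx => (sub_pos.2 (F22_lt_one (hl x hx).le)).ne'))

end IsMalthusian

theorem nbar0_continuous_bounded_general (lam : ℝ × ℝ → ℝ) (hlam : IsMalthusian lam)
    (η : ℝ) :
    (∀ x ∈ viable, u2 lam x = 1 / (1 + lam x)) ∧
    ContinuousOn (nbar0 lam η) viable ∧
    (∃ C : ℝ, ∀ x ∈ viable, |nbar0 lam η x| ≤ C) := by
  refine ⟨fun x hx => u2_eq (by linarith [(hlam x hx).1]), ?_, 1 / |η|, fun x hx => ?_⟩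
  · exact (hlam.continuousOn.div_const η).mul (continuousOn_const.div hlam.continuousOn_denom
      fun x hx => (zero_lt_one.trans_le (hlam.one_le_denom hx)).ne')
  · have hD := hlam.one_le_denom hx
    rw [nbar0, abs_mul, abs_div, abs_of_pos (hlam x hx).1,
      abs_of_pos (one_div_pos.2 (zero_lt_one.trans_le hD))]
    calc _ ≤ lam x / |η| * 1 :=
          mul_le_mul_of_nonneg_left (div_le_one_of_le₀ hD (zero_le_one.trans hD))
            (div_nonneg (hlam x hx).1.le (abs_nonneg η))
      _ ≤ 1 / |η| := by rw [mul_one]; gcongr; exact (hlam.lt_one hx).le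

/-- `u₂ = 1/(1+λ)`, and the map `x ↦ n̄¹_x(0)` is continuous and bounded on `𝒱`. -/
theorem nbar0_continuous_bounded (lam : ℝ × ℝ → ℝ) (hlam : IsMalthusian lam)
    (η : ℝ) (hη : 0 < η) :
    (∀ x ∈ viable, u2 lam x = 1 / (1 + lam x)) ∧
    ContinuousOn (nbar0 lam η) viable ∧
    (∃ C : ℝ, ∀ x ∈ viable, |nbar0 lam η x| ≤ C) :=
  nbar0_continuous_bounded_general lam hlam η
end
end
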